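/- BBPSSW entanglement distillation of isotropic states: let f₁, f₂ ∈ [0,1] and let ρ₁ = ρ_iso(f₁) be a state of the qubit pair A₁B₁ and ρ₂ = ρ_iso(f₂) a state of the qubit pair A₂B₂. Then the success branch of the distillation protocol satisfies: (i) p_succ := Tr[ D¹(ρ₁ ⊗ ρ₂) ] = (8/9)f₁f₂ − (2/9)(f₁ + f₂) + 5/9, and (ii) ⟨Φ⁺| D¹(ρ₁ ⊗ ρ₂) |Φ⁺⟩ = (10/9)f₁f₂ − (1/9)(f₁ + f₂) + 1/9; consequently the fidelity of the renormalized output state with the maximally entangled state is ((10/9)f₁f₂ − (1/9)(f₁+f₂) + 1/9)/p_succ. -/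
import Mathlib


open Matrix BigOperators

noncomputable section

/-- A qubit, with the bit-flip arithmetic of `ZMod 2`. -/
abbrev Qb := ZMod 2

/-- Qubit Bell state vector `|Φ^{z,x}⟩ = (Z^z X^x ⊗ 1)|Φ⟩`, so that
`Φ⁺ = Φ^{0,0}`, `Φ⁻ = Φ^{1,0}`, `Ψ⁺ = Φ^{0,1}`, `Ψ⁻ = ± Φ^{1,1}`. -/
def bellVec (z x : Qb) : Qb × Qb → ℂ :=
  fun jk => if jk.1 = jk.2 + x then ((-1 : ℂ)) ^ ((jk.1 * z).val) / (Real.sqrt 2 : ℂ) else 0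

/-- Rank-one projector `|ψ⟩⟨ψ|`. -/
def projv {m' : Type*} (ψ : m' → ℂ) : Matrix m' m' ℂ := Matrix.vecMulVec ψ (star ψ)

/-- Fidelity `⟨ψ|ρ|ψ⟩` of a state `ρ` with a pure state `|ψ⟩`. -/
def fidTo {m' : Type*} [Fintype m'] (ψ : m' → ℂ) (ρ : Matrix m' m' ℂ) : ℂ :=
  ∑ i, ∑ j, (starRingEnd ℂ) (ψ i) * ρ i j * ψ j

/-- The two-qubit isotropic state with fidelity `f`:
`ρ_iso(f) = f Φ⁺ + ((1-f)/3)(Φ⁻ + Ψ⁺ + Ψ⁻)`. -/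
def isoState (f : ℝ) : Matrix (Qb × Qb) (Qb × Qb) ℂ :=
  (f : ℂ) • projv (bellVec 0 0) +
    (((1 - f) / 3 : ℝ) : ℂ) •
      (projv (bellVec 1 0) + projv (bellVec 0 1) + projv (bellVec 1 1))

/-- The contraction map `K^x = ⟨x|₂ CNOT : ℂ² ⊗ ℂ² → ℂ²`, where the CNOT has control
on the first factor. -/
def Kc (x : Qb) : Matrix Qb (Qb × Qb) ℂ :=
  Matrix.of fun r ct => if r = ct.1 ∧ x = ct.2 + ct.1 then 1 else 0

/-- `K^x_A ⊗ K^x_B` acting on the four-qubit system `(A₁A₂)(B₁B₂)`, with output `(A₁B₁)`. -/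
def KAB (x : Qb) : Matrix (Qb × Qb) ((Qb × Qb) × (Qb × Qb)) ℂ :=
  Matrix.of fun o i => Kc x o.1 i.1 * Kc x o.2 i.2

/-- `ρ₁` (state of `A₁B₁`) and `ρ₂` (state of `A₂B₂`) arranged as a state of the system
with index `((A₁, A₂), (B₁, B₂))`. -/
def arrange (ρ1 ρ2 : Matrix (Qb × Qb) (Qb × Qb) ℂ) :
    Matrix ((Qb × Qb) × (Qb × Qb)) ((Qb × Qb) × (Qb × Qb)) ℂ :=
  Matrix.of fun i i' =>
    ρ1 (i.1.1, i.2.1) (i'.1.1, i'.2.1) * ρ2 (i.1.2, i.2.2) (i'.1.2, i'.2.2)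

/-- The success branch `D¹` of the BBPSSW entanglement distillation protocol. -/
def bbpsswSucc (σ : Matrix ((Qb × Qb) × (Qb × Qb)) ((Qb × Qb) × (Qb × Qb)) ℂ) :
    Matrix (Qb × Qb) (Qb × Qb) ℂ :=
  KAB 0 * σ * (KAB 0)ᴴ + KAB 1 * σ * (KAB 1)ᴴ


lemma sumQb (g : Qb → ℂ) : ∑ i, g i = g 0 + g 1 := Fin.sum_univ_two g

lemma sumQb2 (g : Qb × Qb → ℂ) : ∑ i, g i = g (0,0) + g (0,1) + g (1,0) + g (1,1) := by
  rw [Fintype.sum_prod_type]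
  simp only [sumQb]; ring

lemma sumQb4 (g : (Qb × Qb) × (Qb × Qb) → ℂ) :
    ∑ i, g i = ∑ a, ∑ b, g (a, b) := by rw [Fintype.sum_prod_type]

lemma Kc_eq (x r : Qb) (ct : Qb × Qb) :
    Kc x r ct = if ct = (r, x + r) then 1 else 0 := by
  obtain ⟨c, t⟩ := ct
  have h : (r = c ∧ x = t + c) ↔ ((c, t) = (r, x + r)) := by
    simp only [Prod.mk.injEq]; revert x r c t; decide
  simp only [Kc, Matrix.of_apply, h]

lemma KAB_eq (x : Qb) (o : Qb × Qb) (i : (Qb × Qb) × (Qb × Qb)) :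
    KAB x o i = if i = ((o.1, x + o.1), (o.2, x + o.2)) then 1 else 0 := by
  simp only [KAB, Matrix.of_apply, Kc_eq, ite_mul, one_mul, zero_mul, Prod.ext_iff]
  simp [ite_and]

lemma collapse (x : Qb) (σ : Matrix ((Qb × Qb) × (Qb × Qb)) ((Qb × Qb) × (Qb × Qb)) ℂ)
    (a b : Qb × Qb) : (KAB x * σ * (KAB x)ᴴ) a b
      = σ ((a.1, x + a.1), (a.2, x + a.2)) ((b.1, x + b.1), (b.2, x + b.2)) := by
  simp only [Matrix.mul_apply, Matrix.conjTranspose_apply, KAB_eq,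
    apply_ite (star : ℂ → ℂ), star_one,
    star_zero, ite_mul, mul_ite, one_mul, mul_one, zero_mul, mul_zero]
  simp

/-- Closed-form real entries of the isotropic state. -/
def ent (f : ℝ) (j k j' k' : Qb) : ℝ :=
  if j + k = 0 ∧ j' + k' = 0 then (if j = j' then (2*f+1)/6 else (4*f-1)/6)
  else if j + k = 1 ∧ j' + k' = 1 ∧ j = j' then (1-f)/3 else 0

lemma qb_cases (q : Qb) : q = 0 ∨ q = 1 := by revert q; decide

lemma iso_apply (f : ℝ) (j k j' k' : Qb) :
    isoState f (j, k) (j', k') = ((ent f j k j' k' : ℝ) : ℂ) := by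
  have hs : ((Real.sqrt 2 : ℝ) : ℂ) ^ 2 = 2 := by
    norm_cast; exact Real.sq_sqrt (by norm_num)
  have hns : ((Real.sqrt 2 : ℝ) : ℂ) ≠ 0 := by
    intro h; rw [h] at hs; norm_num at hs
  have hinv2 : ((Real.sqrt 2 : ℝ) : ℂ)⁻¹ ^ 2 = 1 / 2 := by
    rw [inv_pow, hs]; norm_num
  have hmul : ((Real.sqrt 2 : ℝ) : ℂ) * ((Real.sqrt 2 : ℝ) : ℂ)⁻¹ = 1 :=
    mul_inv_cancel₀ hns
  rcases qb_cases j with rfl | rfl <;> rcases qb_cases k with rfl | rfl <;>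
    rcases qb_cases j' with rfl | rfl <;> rcases qb_cases k' with rfl | rfl
  all_goals simp (config := { decide := true }) [isoState, projv, bellVec, ent,
    Matrix.vecMulVec_apply, Complex.star_def, map_inv₀, Complex.conj_ofReal, hinv2, hmul]
  all_goals ring_nf
  all_goals try norm_num [hinv2, hmul, mul_comm]
  all_goals try ring

lemma bb_apply (f1 f2 : ℝ) (a b : Qb × Qb) :
    bbpsswSucc (arrange (isoState f1) (isoState f2)) a b
      = ((ent f1 a.1 a.2 b.1 b.2 *
          (ent f2 a.1 a.2 b.1 b.2
            + ent f2 (1 + a.1) (1 + a.2) (1 + b.1) (1 + b.2)) : ℝ) : ℂ) := by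
  simp only [bbpsswSucc, Matrix.add_apply, collapse, arrange, Matrix.of_apply, zero_add]
  simp only [iso_apply]
  push_cast
  ring

lemma fidTo_smul {m' : Type*} [Fintype m'] (ψ : m' → ℂ) (c : ℂ) (ρ : Matrix m' m' ℂ) :
    fidTo ψ (c • ρ) = c * fidTo ψ ρ := by
  simp only [fidTo, Matrix.smul_apply, smul_eq_mul, Finset.mul_sum]
  exact Finset.sum_congr rfl fun i _ => Finset.sum_congr rfl fun j _ => by ring

/-- **BBPSSW entanglement distillation of isotropic states**: success probability,
unnormalized output fidelity, and normalized output fidelity. -/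
theorem bbpssw_isotropic (f1 f2 : ℝ) (hf1 : 0 ≤ f1 ∧ f1 ≤ 1) (hf2 : 0 ≤ f2 ∧ f2 ≤ 1) :
    (bbpsswSucc (arrange (isoState f1) (isoState f2))).trace
        = ((8 / 9 * f1 * f2 - 2 / 9 * (f1 + f2) + 5 / 9 : ℝ) : ℂ) ∧
    fidTo (bellVec 0 0) (bbpsswSucc (arrange (isoState f1) (isoState f2)))
        = ((10 / 9 * f1 * f2 - 1 / 9 * (f1 + f2) + 1 / 9 : ℝ) : ℂ) ∧
    fidTo (bellVec 0 0)
        (((8 / 9 * f1 * f2 - 2 / 9 * (f1 + f2) + 5 / 9 : ℝ) : ℂ)⁻¹ •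
          bbpsswSucc (arrange (isoState f1) (isoState f2)))
        = (((10 / 9 * f1 * f2 - 1 / 9 * (f1 + f2) + 1 / 9)
            / (8 / 9 * f1 * f2 - 2 / 9 * (f1 + f2) + 5 / 9) : ℝ) : ℂ) := by
  have hs : ((Real.sqrt 2 : ℝ) : ℂ) ^ 2 = 2 := by
    norm_cast; exact Real.sq_sqrt (by norm_num)
  have hns : ((Real.sqrt 2 : ℝ) : ℂ) ≠ 0 := by
    intro h; rw [h] at hs; norm_num at hs
  have hinv2 : ((Real.sqrt 2 : ℝ) : ℂ)⁻¹ ^ 2 = 1 / 2 := by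
    rw [inv_pow, hs]; norm_num
  have htr : (bbpsswSucc (arrange (isoState f1) (isoState f2))).trace
      = ((8 / 9 * f1 * f2 - 2 / 9 * (f1 + f2) + 5 / 9 : ℝ) : ℂ) := by
    rw [Matrix.trace]
    rw [show ∑ i, (bbpsswSucc (arrange (isoState f1) (isoState f2))).diag i
        = ∑ i, bbpsswSucc (arrange (isoState f1) (isoState f2)) i i from rfl]
    rw [sumQb2 (fun i => bbpsswSucc (arrange (isoState f1) (isoState f2)) i i)]
    simp only [bb_apply]
    simp (config := { decide := true }) [ent]
    push_cast
    ring
  have hfid : fidTo (bellVec 0 0) (bbpsswSucc (arrange (isoState f1) (isoState f2)))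
      = ((10 / 9 * f1 * f2 - 1 / 9 * (f1 + f2) + 1 / 9 : ℝ) : ℂ) := by
    rw [fidTo]
    rw [sumQb2]
    simp only [sumQb2]
    simp (config := { decide := true }) only [bb_apply, bellVec, mul_zero, ZMod.val_zero,
      pow_zero, if_true, if_false, map_div₀, _root_.map_one, Complex.conj_ofReal,
      mul_one, one_mul, zero_mul, mul_zero, zero_add, add_zero,
      Complex.star_def, map_inv₀]
    simp (config := { decide := true }) [ent, Complex.conj_ofReal]
    push_cast
    ring_nf
    norm_num [hinv2]
    try push_cast
    try ring
  refine ⟨htr, hfid, ?_⟩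
  rw [fidTo_smul, hfid, Complex.ofReal_div]
  ring
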